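/- The set of triwords of size n ≥ 1, ordered componentwise, is a lattice (the Hochschild lattice). -/
import Mathlib


def IsTriword {n : ℕ} (u : Fin n → Fin 3) : Prop :=
  (∀ i : Fin n, (i : ℕ) = 0 → u i ≠ 2) ∧
  ∀ i j : Fin n, i < j → u i = 0 → u j ≠ 1

/-- Triwords of size `n`, ordered componentwise (order inherited from the
product order on `Fin n → Fin 3`). -/
abbrev Triword (n : ℕ) := {u : Fin n → Fin 3 // IsTriword u}

lemma fin3_le_one_of_ne_two (a : Fin 3) (h : a ≠ 2) : a ≤ 1 := by
  fin_cases a <;> simp_all <;> decide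

lemma fin3_ne_two_of_le_one (a : Fin 3) (h : a ≤ 1) : a ≠ 2 := by
  fin_cases a <;> simp_all <;> decide

lemma fin3_eq_zero_of_le_zero (a : Fin 3) (h : a ≤ 0) : a = 0 := by
  fin_cases a <;> simp_all <;> decide

lemma triword_le_iff {n : ℕ} (u v : Triword n) : u ≤ v ↔ ∀ i, u.1 i ≤ v.1 i := by
  rw [← Subtype.coe_le_coe]
  exact Pi.le_def

/-- The set of triwords of size `n ≥ 1`, ordered componentwise, is a lattice:
every pair of elements has a least upper bound and a greatest lower bound. -/
theorem hochschild_lattice (n : ℕ) (hn : 1 ≤ n) (u v : Triword n) :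
    (∃ s : Triword n, IsLUB {u, v} s) ∧ (∃ t : Triword n, IsGLB {u, v} t) := by
  classical
  constructor
  · -- join: pointwise max
    have hs : IsTriword (fun i => u.1 i ⊔ v.1 i) := by
      constructor
      · intro i hi
        apply fin3_ne_two_of_le_one
        exact sup_le (fin3_le_one_of_ne_two _ (u.2.1 i hi))
          (fin3_le_one_of_ne_two _ (v.2.1 i hi))
      · intro i j hij h0 h1
        have hu0 : u.1 i = 0 := fin3_eq_zero_of_le_zero _ (h0 ▸ le_sup_left)
        have hv0 : v.1 i = 0 := fin3_eq_zero_of_le_zero _ (h0 ▸ le_sup_right)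
        rcases max_choice (u.1 j) (v.1 j) with h | h
        · exact u.2.2 i j hij hu0 (h ▸ h1)
        · exact v.2.2 i j hij hv0 (h ▸ h1)
    refine ⟨⟨_, hs⟩, ?_, ?_⟩
    · rintro w (rfl | rfl)
      · exact (triword_le_iff _ _).2 fun i => le_sup_left
      · exact (triword_le_iff _ _).2 fun i => le_sup_right
    · intro w hw
      have hu := hw (Set.mem_insert _ _)
      have hv := hw (Set.mem_insert_of_mem _ rfl)
      exact (triword_le_iff _ _).2 fun i =>
        sup_le ((triword_le_iff _ _).1 hu i) ((triword_le_iff _ _).1 hv i)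
  · -- meet: sup of all common lower bounds
    haveI : Fintype (Triword n) := Fintype.ofFinite _
    set L : Finset (Triword n) := Finset.univ.filter (fun w => w ≤ u ∧ w ≤ v) with hL
    have hbot : IsTriword (fun _ : Fin n => (0 : Fin 3)) := by
      constructor
      · intro i _; show (0 : Fin 3) ≠ 2; decide
      · intro i j _ _; show (0 : Fin 3) ≠ 1; decide
    have hbotle : ∀ w : Triword n, (⟨_, hbot⟩ : Triword n) ≤ w := by
      intro w
      exact (triword_le_iff _ _).2 fun i => Fin.zero_le _
    have hLne : L.Nonempty := ⟨⟨_, hbot⟩, by simp [hL, hbotle]⟩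
    have hmem : ∀ w : Triword n, w ∈ L ↔ (w ≤ u ∧ w ≤ v) := by
      intro w; simp [hL]
    have ht : IsTriword (fun i => L.sup (fun w => w.1 i)) := by
      constructor
      · intro i hi
        apply fin3_ne_two_of_le_one
        apply Finset.sup_le
        intro w _
        exact fin3_le_one_of_ne_two _ (w.2.1 i hi)
      · intro i j hij h0 h1
        obtain ⟨w, hwL, hw⟩ := Finset.exists_mem_eq_sup L hLne (fun w => w.1 j)
        have hwj : w.1 j = 1 := by rw [← hw]; exact h1
        have hwi : w.1 i = 0 :=
          fin3_eq_zero_of_le_zero _ (h0 ▸ Finset.le_sup (f := fun w => w.1 i) hwL)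
        exact w.2.2 i j hij hwi hwj
    refine ⟨⟨_, ht⟩, ?_, ?_⟩
    · rintro w (rfl | rfl)
      · refine (triword_le_iff _ _).2 fun i => Finset.sup_le fun x hx => ?_
        exact (triword_le_iff _ _).1 ((hmem x).1 hx).1 i
      · refine (triword_le_iff _ _).2 fun i => Finset.sup_le fun x hx => ?_
        exact (triword_le_iff _ _).1 ((hmem x).1 hx).2 i
    · intro w hw
      have hwL : w ∈ L := (hmem w).2
        ⟨hw (Set.mem_insert _ _), hw (Set.mem_insert_of_mem _ rfl)⟩
      exact (triword_le_iff _ _).2 fun i => Finset.le_sup (f := fun x => x.1 i) hwL
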